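/- Let X and Y be finite types, let f be a faithful X-Y embedding, let θ ⊆ Δ_X be an arbitrary constraint, and let μ ∈ Δ_X and ν ∈ Δ_Y correspond under f. Then the relative-entropy projections μ|θ and ν|f*(θ) correspond under f (as sets of measures). -/

import Mathlib

/-!
On a finite type every homomorphism of set algebras `f` is `S ↦ g ⁻¹' S` for a map `g : Y → X`.
So `μ` and `ν` correspond exactly when `μ` is the pushforward `g_* ν`, and `f*(θ)` is the set of
measures whose pushforward lies in `θ`. Two facts then transfer minimizers in both directions:
pushing forward never increases relative entropy (the log-sum inequality on each fibre of `g`),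
and every `μ' ≪ g_* ν` is the pushforward of a measure `ν'` with `D(ν'‖ν) = D(μ'‖g_* ν)`, obtained
by rescaling `ν` on each fibre by the factor `μ'(x) / (g_* ν)(x)`.
-/

/-- A probability measure (probability mass function) on a finite type. -/
structure PM (X : Type) [Fintype X] where
  pm : X → ℝ
  nonneg : ∀ x, 0 ≤ pm x
  total : ∑ x, pm x = 1

namespace PM

variable {X Y : Type} [Fintype X] [Fintype Y]

/-- The probability of a set `S`: `μ(S) = ∑_{x ∈ S} μ(x)`. -/
noncomputable def prob (μ : PM X) (S : Set X) : ℝ := ∑ x, S.indicator μ.pm x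

lemma prob_nonneg (μ : PM X) (S : Set X) : 0 ≤ μ.prob S :=
  Finset.sum_nonneg fun x _ => Set.indicator_apply_nonneg fun _ => μ.nonneg x

/-- Marginal on the first component: `μ_X(A) = μ(A × Y)`. -/
noncomputable def margFst (μ : PM (X × Y)) : PM X where
  pm x := ∑ y, μ.pm (x, y)
  nonneg x := Finset.sum_nonneg fun y _ => μ.nonneg (x, y)
  total := by rw [← μ.total, ← Fintype.sum_prod_type]

/-- Marginal on the second component: `μ_Y(B) = μ(X × B)`. -/
noncomputable def margSnd (μ : PM (X × Y)) : PM Y where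
  pm y := ∑ x, μ.pm (x, y)
  nonneg y := Finset.sum_nonneg fun x _ => μ.nonneg (x, y)
  total := by rw [← μ.total, ← Fintype.sum_prod_type_right]

/-- Conditioning `μ|S`; the junk value `μ` is returned when `μ(S) = 0`. -/
noncomputable def cond (μ : PM X) (S : Set X) : PM X :=
  if h : 0 < μ.prob S then
    { pm := fun x => S.indicator μ.pm x / μ.prob S
      nonneg := fun x =>
        div_nonneg (Set.indicator_apply_nonneg fun _ => μ.nonneg x) (le_of_lt h)
      total := by
        rw [← Finset.sum_div]
        exact div_self (ne_of_gt h) }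
  else μ

end PM

open PM

/-- An `X`-inference procedure: a partial map on sets of probability measures. -/
structure InfProc (X : Type) [Fintype X] where
  dom : Set (Set (PM X))
  map : Set (PM X) → Set (PM X)
  map_subset : ∀ A ∈ dom, map A ⊆ A
  map_empty_iff : ∀ A ∈ dom, (map A = ∅ ↔ A = ∅)

/-- `KB ⊢_I θ`. -/
def Infers {X : Type} [Fintype X] (I : InfProc X) (KB θ : Set (PM X)) : Prop :=
  I.map KB ⊆ θ

section Lift

variable {X Y : Type} [Fintype X] [Fintype Y]

/-- A constraint on `Δ_X` viewed as a constraint on `Δ_{X×Y}`: `KB↑`. -/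
def liftKB (Y : Type) [Fintype Y] (KB : Set (PM X)) : Set (PM (X × Y)) :=
  {μ | margFst μ ∈ KB}

/-- `proj_X(B) = {μ_X : μ ∈ B}`. -/
def projFst (B : Set (PM (X × Y))) : Set (PM X) := margFst '' B

/-- `ψ ⊆ Δ_{X×Y}` is `X`-conservative over `KB ⊆ Δ_X`. -/
def Conservative (KB : Set (PM X)) (ψ : Set (PM (X × Y))) : Prop :=
  projFst (liftKB Y KB ∩ ψ) = KB

end Lift

/-- Robustness of a finitary inference procedure. -/
def Robust (I : ∀ (X : Type) [Fintype X], InfProc X) : Prop :=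
  ∀ (X Y : Type) [Fintype X] [Fintype Y], ∀ KB φ : Set (PM X),
    KB ∈ (I X).dom → ∀ ψ : Set (PM (X × Y)), Conservative KB ψ →
      (Infers (I X) KB φ ↔ Infers (I (X × Y)) (liftKB Y KB ∩ ψ) (liftKB Y φ))

/-- An inference procedure is essentially entailment. -/
def EssEntail {X : Type} [Fintype X] (I : InfProc X) : Prop :=
  ∀ KB ∈ I.dom, ∀ (S : Set X) (α β : ℝ),
    Infers I KB {μ | α < μ.prob S ∧ μ.prob S < β} →
    KB ⊆ {μ | α ≤ μ.prob S ∧ μ.prob S ≤ β}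

def DI1 (I : ∀ (X : Type) [Fintype X], InfProc X) : Prop :=
  ∀ (X : Type) [Fintype X], ∀ (S : Set X) (α β : ℝ), α ≤ β →
    {μ : PM X | α ≤ μ.prob S ∧ μ.prob S ≤ β} ∈ (I X).dom

def DI2 (I : ∀ (X : Type) [Fintype X], InfProc X) : Prop :=
  ∀ (X Y : Type) [Fintype X] [Fintype Y], ∀ KB : Set (PM X),
    KB ∈ (I X).dom → liftKB Y KB ∈ (I (X × Y)).dom

def DI3 (I : ∀ (X : Type) [Fintype X], InfProc X) : Prop :=
  ∀ (X : Type) [Fintype X], ∀ KB₁ KB₂ : Set (PM X),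
    KB₁ ∈ (I X).dom → KB₂ ∈ (I X).dom → KB₁ ∩ KB₂ ∈ (I X).dom

/-- An `X`-`Y` embedding: a homomorphism of set algebras. -/
structure Emb (X Y : Type) where
  f : Set X → Set Y
  map_union : ∀ S T, f (S ∪ T) = f S ∪ f T
  map_compl : ∀ S, f Sᶜ = (f S)ᶜ

/-- A faithful embedding. -/
def Emb.Faithful {X Y : Type} (e : Emb X Y) : Prop :=
  ∀ S T : Set X, S ⊆ T ↔ e.f S ⊆ e.f T

section Embeddings

variable {X Y : Type} [Fintype X] [Fintype Y]

/-- `μ` and `ν` correspond under `f`. -/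
def Corr (e : Emb X Y) (μ : PM X) (ν : PM Y) : Prop :=
  ∀ S : Set X, μ.prob S = ν.prob (e.f S)

/-- `f*(D)`, the union over `μ ∈ D` of the measures corresponding to `μ`. -/
def fstar (e : Emb X Y) (D : Set (PM X)) : Set (PM Y) :=
  {ν | ∃ μ ∈ D, Corr e μ ν}

/-- Sets of measures `D_X` and `D_Y` correspond under `f`. -/
def SetCorr (e : Emb X Y) (DX : Set (PM X)) (DY : Set (PM Y)) : Prop :=
  (∀ ν ∈ DY, ∃ μ ∈ DX, Corr e μ ν) ∧ (∀ μ ∈ DX, ∃ ν ∈ DY, Corr e μ ν)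

end Embeddings

/-- Representation independence of a finitary inference procedure. -/
def RepInd (I : ∀ (X : Type) [Fintype X], InfProc X) : Prop :=
  ∀ (X Y : Type) [Fintype X] [Fintype Y] (e : Emb X Y), e.Faithful →
    (∀ KB : Set (PM X), KB ∈ (I X).dom ↔ fstar e KB ∈ (I Y).dom) ∧
    (∀ KB : Set (PM X), KB ∈ (I X).dom → ∀ θ : Set (PM X),
      (Infers (I X) KB θ ↔ Infers (I Y) (fstar e KB) (fstar e θ)))

def DI4 (I : ∀ (X : Type) [Fintype X], InfProc X) : Prop :=
  ∀ (X Y : Type) [Fintype X] [Fintype Y] (e : Emb X Y), e.Faithful →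
    ∀ KB : Set (PM X), (KB ∈ (I X).dom ↔ fstar e KB ∈ (I Y).dom)

/-- `A ⇔ B` for sets of measures. -/
def iffSet {α : Type*} (A B : Set α) : Set α := (A ∩ B) ∪ (Aᶜ ∩ Bᶜ)

def DI5 (I : ∀ (X : Type) [Fintype X], InfProc X) : Prop :=
  ∀ (X Y : Type) [Fintype X] [Fintype Y] (KB : Set (PM (X × Y))) (e : Emb X Y),
    e.Faithful → KB ∈ (I (X × Y)).dom → ∀ φ₁ : Set (PM X),
      KB ∩ iffSet (liftKB Y φ₁) {μ | margSnd μ ∈ fstar e φ₁} ∈ (I (X × Y)).dom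

/-- Minimal default independence. -/
def MDI (I : ∀ (X : Type) [Fintype X], InfProc X) : Prop :=
  ∀ (X Y : Type) [Fintype X] [Fintype Y], ∀ KB : Set (PM X), ∀ (S : Set X) (T : Set Y),
    liftKB Y KB ∈ (I (X × Y)).dom →
    Infers (I (X × Y)) (liftKB Y KB)
      {μ | μ.prob (S ×ˢ T) = μ.prob (S ×ˢ (Set.univ : Set Y)) * μ.prob ((Set.univ : Set X) ×ˢ T)}

/-- `KB` depends only on `S₁, …, S_k`. -/
def DependsOnly {X : Type} [Fintype X] {k : ℕ} (KB : Set (PM X)) (S : Fin k → Set X) : Prop :=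
  ∀ μ μ' : PM X, (∀ i, μ.prob (S i) = μ'.prob (S i)) → (μ ∈ KB ↔ μ' ∈ KB)

/-- An atom over `S₁, …, S_k`. -/
def Atom {X : Type} {k : ℕ} (S : Fin k → Set X) (c : Fin k → Bool) : Set X :=
  ⋂ i, (if c i then S i else (S i)ᶜ)

section KL

variable {X : Type} [Fintype X]

/-- Absolute continuity of pmfs. -/
def AbsCont (μ' μ : PM X) : Prop := ∀ x, μ.pm x = 0 → μ'.pm x = 0

/-- Relative entropy `D(μ'‖μ) ∈ [0,∞]` (it is `⊤` unless `μ' ≪ μ`). -/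
noncomputable def KL (μ' μ : PM X) : EReal := by
  classical
  exact if AbsCont μ' μ then
    ((∑ x, μ'.pm x * Real.log (μ'.pm x / μ.pm x) : ℝ) : EReal)
  else ⊤

/-- The relative-entropy projection `μ|θ`. -/
def klProj (μ : PM X) (θ : Set (PM X)) : Set (PM X) :=
  {μ' | μ' ∈ θ ∧ KL μ' μ ≠ ⊤ ∧ ∀ μ'' ∈ θ, KL μ' μ ≤ KL μ'' μ}

/-- `D|θ = ⋃_{μ ∈ D} μ|θ`. -/
def DProj (D : Set (PM X)) (θ : Set (PM X)) : Set (PM X) :=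
  ⋃ μ ∈ D, klProj μ θ

end KL

section Products

variable {n : ℕ} {X : Fin n → Type} [∀ i, Fintype (X i)]

/-- The `i`-th marginal of a measure on a finite product. -/
noncomputable def margPi (μ : PM (∀ i, X i)) (i : Fin n) : PM (X i) where
  pm a := μ.prob {x | x i = a}
  nonneg a := PM.prob_nonneg _ _
  total := by
    classical
    unfold PM.prob
    rw [Finset.sum_comm]
    have h : ∀ x : (∀ i, X i),
        (∑ a, ({y : ∀ j, X j | y i = a}).indicator μ.pm x) = μ.pm x := by
      intro x
      simp [Set.indicator_apply]
    simp only [h]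
    exact μ.total

/-- `μ` is a product measure on `X₁ × ⋯ × Xₙ`. -/
def IsProdPM (μ : PM (∀ i, X i)) : Prop :=
  ∃ μi : ∀ i, PM (X i), ∀ U : ∀ i, Set (X i),
    μ.prob {x | ∀ i, x i ∈ U i} = ∏ i, (μi i).prob (U i)

end Products

/-- The set `P_Π(X)` of product measures. -/
def PPi {n : ℕ} (X : Fin n → Type) [∀ i, Fintype (X i)] : Set (PM (∀ i, X i)) :=
  {μ | IsProdPM μ}

/-- `e` is a product embedding. -/
def IsProdEmb {n : ℕ} {X Y : Fin n → Type} (e : Emb (∀ i, X i) (∀ i, Y i)) : Prop :=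
  ∃ ei : ∀ i, Emb (X i) (Y i), ∀ S : Set (∀ i, X i),
    e.f S = ⋃ x ∈ S, {y | ∀ i, y i ∈ (ei i).f {x i}}

open Real

theorem mul_log_add_sub_le_mul_log_div {a b r : ℝ} (ha : 0 ≤ a) (hb : 0 ≤ b)
    (hab : b = 0 → a = 0) (hr : 0 < r) : a * log r + a - b * r ≤ a * log (a / b) := by
  rcases ha.eq_or_lt with rfl | ha
  · simpa using mul_nonneg hb hr.le
  have hb : 0 < b := hb.lt_of_ne fun h => ha.ne' (hab h.symm)
  have hlog := one_sub_inv_le_log_of_pos (show 0 < a / (b * r) by positivity)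
  rw [← div_div, log_div (by positivity) hr.ne'] at hlog
  have key : a - b * r = a * (1 - (a / b / r)⁻¹) := by field_simp
  linarith [mul_le_mul_of_nonneg_left hlog ha.le]

theorem sum_mul_log_div_sum_le {ι : Type*} (s : Finset ι) (a b : ι → ℝ)
    (ha : ∀ i ∈ s, 0 ≤ a i) (hb : ∀ i ∈ s, 0 ≤ b i) (hab : ∀ i ∈ s, b i = 0 → a i = 0) :
    (∑ i ∈ s, a i) * log ((∑ i ∈ s, a i) / ∑ i ∈ s, b i) ≤
      ∑ i ∈ s, a i * log (a i / b i) := by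
  set A := ∑ i ∈ s, a i
  set B := ∑ i ∈ s, b i
  rcases (Finset.sum_nonneg ha).eq_or_lt with hA | hA
  · have hzero : ∀ i ∈ s, a i = 0 := (Finset.sum_eq_zero_iff_of_nonneg ha).mp hA.symm
    rw [show A = 0 from hA.symm, zero_mul,
      Finset.sum_eq_zero fun i hi => by rw [hzero i hi, zero_mul]]
  have hB : 0 < B := by
    refine (Finset.sum_nonneg hb).lt_of_ne fun hB => hA.ne ?_
    have hzero := (Finset.sum_eq_zero_iff_of_nonneg hb).mp hB.symm
    exact (Finset.sum_eq_zero fun i hi => hab i hi (hzero i hi)).symm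
  calc A * log (A / B) = ∑ i ∈ s, (a i * log (A / B) + a i - b i * (A / B)) := by
        rw [Finset.sum_sub_distrib, Finset.sum_add_distrib, ← Finset.sum_mul, ← Finset.sum_mul]
        field_simp
        ring
    _ ≤ ∑ i ∈ s, a i * log (a i / b i) :=
        Finset.sum_le_sum fun i hi =>
          mul_log_add_sub_le_mul_log_div (ha i hi) (hb i hi) (hab i hi) (by positivity)

namespace Emb

variable {X Y : Type} (e : Emb X Y)

theorem map_univ : e.f Set.univ = Set.univ := by
  simpa only [Set.union_compl_self, e.map_compl] using e.map_union ∅ ∅ᶜ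

theorem map_empty : e.f ∅ = ∅ := by
  rw [← Set.compl_univ, e.map_compl, e.map_univ, Set.compl_univ]

theorem monotone : Monotone e.f := fun S T h => by
  rw [← Set.union_eq_self_of_subset_left h, e.map_union]
  exact Set.subset_union_left

theorem exists_mem_map_singleton [Fintype X] (y : Y) : ∃ x, y ∈ e.f {x} := by
  let φ : SupBotHom (Set X) (Set Y) := ⟨⟨e.f, e.map_union⟩, e.map_empty⟩
  have h := map_finset_sup φ Finset.univ fun x => {x}
  simp only [Finset.sup_set_eq_biUnion] at h
  change e.f _ = ⋃ x ∈ Finset.univ, e.f {x} at h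
  have hy : y ∈ e.f (⋃ x ∈ Finset.univ, {x}) := by
    simp only [Finset.mem_univ, Set.iUnion_true, Set.iUnion_of_singleton, e.map_univ,
      Set.mem_univ]
  rw [h] at hy
  simpa using hy

theorem exists_eq_preimage [Fintype X] : ∃ g : Y → X, ∀ S, e.f S = g ⁻¹' S := by
  choose g hg using e.exists_mem_map_singleton
  refine ⟨g, fun S => Set.ext fun y => ⟨fun hy => ?_, fun hy => ?_⟩⟩
  · by_contra hgy
    have : e.f S ⊆ e.f {g y}ᶜ := e.monotone fun x hx => by rintro rfl; exact hgy hx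
    exact (e.map_compl _ ▸ this) hy (hg y)
  · exact e.monotone (Set.singleton_subset_iff.mpr hy) (hg y)

end Emb

namespace PM

variable {X Y : Type} [Fintype X] [Fintype Y]

@[ext]
theorem ext {μ ν : PM X} (h : μ.pm = ν.pm) : μ = ν := by
  cases μ; cases ν; subst h; rfl

theorem prob_singleton (μ : PM X) (x : X) : μ.prob {x} = μ.pm x := by
  classical
  simp [prob, Set.indicator_apply]

variable [DecidableEq X]

noncomputable def map (g : Y → X) (ν : PM Y) : PM X where
  pm x := ∑ y with g y = x, ν.pm y
  nonneg _ := Finset.sum_nonneg fun y _ => ν.nonneg y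
  total := by rw [Finset.sum_fiberwise]; exact ν.total

theorem map_pm (g : Y → X) (ν : PM Y) (x : X) : (ν.map g).pm x = ∑ y with g y = x, ν.pm y :=
  rfl

theorem sum_fiber_mul (g : Y → X) (ν : PM Y) (F : X → ℝ) (x : X) :
    ∑ y with g y = x, ν.pm y * F (g y) = (ν.map g).pm x * F x := by
  rw [map_pm, Finset.sum_mul]
  exact Finset.sum_congr rfl fun y hy => by rw [(Finset.mem_filter.1 hy).2]

theorem prob_map (g : Y → X) (ν : PM Y) (S : Set X) : (ν.map g).prob S = ν.prob (g ⁻¹' S) := by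
  unfold prob
  rw [← Finset.sum_fiberwise Finset.univ g]
  refine Finset.sum_congr rfl fun x _ => ?_
  have hfiber {y} (hy : y ∈ ({y | g y = x} : Finset Y)) : y ∈ g ⁻¹' S ↔ x ∈ S := by
    rw [Set.mem_preimage, (Finset.mem_filter.1 hy).2]
  by_cases hx : x ∈ S
  · rw [Set.indicator_of_mem hx, map_pm]
    exact Finset.sum_congr rfl fun y hy => (Set.indicator_of_mem ((hfiber hy).2 hx) _).symm
  · rw [Set.indicator_of_notMem hx]
    exact (Finset.sum_eq_zero fun y hy => Set.indicator_of_notMem (mt (hfiber hy).1 hx) _).symm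

end PM

theorem AbsCont.map {X Y : Type} [Fintype X] [Fintype Y] [DecidableEq X] {ν' ν : PM Y}
    (h : AbsCont ν' ν) (g : Y → X) : AbsCont (ν'.map g) (ν.map g) := fun _ hx =>
  Finset.sum_eq_zero fun y hy =>
    h y ((Finset.sum_eq_zero_iff_of_nonneg fun y _ => ν.nonneg y).1 hx y hy)

section Correspondence

variable {X Y : Type} [Fintype X] [Fintype Y] [DecidableEq X] {e : Emb X Y} {g : Y → X}

theorem corr_iff_map_eq (hg : ∀ S, e.f S = g ⁻¹' S) {μ : PM X} {ν : PM Y} :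
    Corr e μ ν ↔ ν.map g = μ := by
  refine ⟨fun hc => PM.ext (funext fun x => ?_), fun h S => ?_⟩
  · rw [← PM.prob_singleton, ← PM.prob_singleton, PM.prob_map, ← hg, ← hc]
  · rw [← h, PM.prob_map, hg]

theorem fstar_eq_preimage (hg : ∀ S, e.f S = g ⁻¹' S) (θ : Set (PM X)) :
    fstar e θ = PM.map g ⁻¹' θ := by
  ext ν
  simp [fstar, corr_iff_map_eq hg]

end Correspondence

section KL

variable {X Y : Type} [Fintype X] [Fintype Y]

theorem KL_of_absCont {μ' μ : PM X} (h : AbsCont μ' μ) :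
    KL μ' μ = ((∑ x, μ'.pm x * log (μ'.pm x / μ.pm x) : ℝ) : EReal) := by
  rw [KL, if_pos h]

theorem KL_of_not_absCont {μ' μ : PM X} (h : ¬AbsCont μ' μ) : KL μ' μ = ⊤ := by
  rw [KL, if_neg h]

theorem absCont_of_KL_ne_top {μ' μ : PM X} (h : KL μ' μ ≠ ⊤) : AbsCont μ' μ :=
  not_not.1 (mt KL_of_not_absCont h)

variable [DecidableEq X]

theorem KL_map_le (g : Y → X) (ν' ν : PM Y) : KL (ν'.map g) (ν.map g) ≤ KL ν' ν := by
  by_cases h : AbsCont ν' ν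
  · rw [KL_of_absCont h, KL_of_absCont (h.map g), EReal.coe_le_coe_iff,
      ← Finset.sum_fiberwise Finset.univ g]
    exact Finset.sum_le_sum fun x _ => sum_mul_log_div_sum_le _ _ _
      (fun y _ => ν'.nonneg y) (fun y _ => ν.nonneg y) fun y _ => h y
  · rw [KL_of_not_absCont h]
    exact le_top

end KL

namespace PM

variable {X Y : Type} [Fintype X] [Fintype Y] [DecidableEq X]

theorem sum_fiber_mul_div_map {g : Y → X} {ν : PM Y} {μ' : PM X} (h : AbsCont μ' (ν.map g))
    (x : X) : ∑ y with g y = x, ν.pm y * (μ'.pm (g y) / (ν.map g).pm (g y)) = μ'.pm x :=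
  (sum_fiber_mul g ν (fun x => μ'.pm x / (ν.map g).pm x) x).trans (mul_div_cancel_of_imp' (h x))

noncomputable def reweight (ν : PM Y) (g : Y → X) (μ' : PM X) (h : AbsCont μ' (ν.map g)) :
    PM Y where
  pm y := ν.pm y * (μ'.pm (g y) / (ν.map g).pm (g y))
  nonneg y := mul_nonneg (ν.nonneg y) (div_nonneg (μ'.nonneg _) ((ν.map g).nonneg _))
  total := by
    rw [← Finset.sum_fiberwise Finset.univ g, ← μ'.total]
    exact Finset.sum_congr rfl fun x _ => sum_fiber_mul_div_map h x

variable {g : Y → X} {ν : PM Y} {μ' : PM X}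

theorem map_reweight (h : AbsCont μ' (ν.map g)) : (ν.reweight g μ' h).map g = μ' :=
  PM.ext (funext (sum_fiber_mul_div_map h))

theorem KL_reweight (h : AbsCont μ' (ν.map g)) : KL (ν.reweight g μ' h) ν = KL μ' (ν.map g) := by
  set q : X → ℝ := fun x => μ'.pm x / (ν.map g).pm x
  have hac : AbsCont (ν.reweight g μ' h) ν := fun y hy => by
    simp [reweight, hy]
  have hterm (y : Y) : (ν.reweight g μ' h).pm y * log ((ν.reweight g μ' h).pm y / ν.pm y) =
      ν.pm y * (q (g y) * log (q (g y))) := by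
    change ν.pm y * q (g y) * log (ν.pm y * q (g y) / ν.pm y) = _
    rcases eq_or_ne (ν.pm y) 0 with h0 | h0
    · simp [h0]
    · rw [mul_div_cancel_left₀ _ h0, mul_assoc]
  rw [KL_of_absCont h, KL_of_absCont hac, EReal.coe_eq_coe_iff, Finset.sum_congr rfl
    fun y _ => hterm y, ← Finset.sum_fiberwise Finset.univ g]
  refine Finset.sum_congr rfl fun x _ => ?_
  rw [sum_fiber_mul g ν (fun x => q x * log (q x)), ← mul_assoc, mul_div_cancel_of_imp' (h x)]

end PM

section Projection

variable {X Y : Type} [Fintype X] [Fintype Y] [DecidableEq X] {g : Y → X} {ν : PM Y}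
  {θ : Set (PM X)}

theorem map_mem_klProj {ν' : PM Y} (h : ν' ∈ klProj ν (PM.map g ⁻¹' θ)) :
    ν'.map g ∈ klProj (ν.map g) θ := by
  obtain ⟨hθ, hfin, hmin⟩ := h
  refine ⟨hθ, ne_top_of_le_ne_top hfin (KL_map_le g ν' ν), fun μ'' hμ'' => ?_⟩
  by_cases hfin'' : KL μ'' (ν.map g) = ⊤
  · exact hfin''.symm ▸ le_top
  have hac := absCont_of_KL_ne_top hfin''
  calc KL (ν'.map g) (ν.map g) ≤ KL ν' ν := KL_map_le g ν' ν
    _ ≤ KL (ν.reweight g μ'' hac) ν := hmin _ (by rwa [Set.mem_preimage, PM.map_reweight])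
    _ = KL μ'' (ν.map g) := PM.KL_reweight hac

theorem exists_mem_klProj_map_eq {μ' : PM X} (h : μ' ∈ klProj (ν.map g) θ) :
    ∃ ν' ∈ klProj ν (PM.map g ⁻¹' θ), ν'.map g = μ' := by
  obtain ⟨hθ, hfin, hmin⟩ := h
  have hac := absCont_of_KL_ne_top hfin
  refine ⟨ν.reweight g μ' hac, ⟨?_, ?_, fun ν'' hν'' => ?_⟩, PM.map_reweight hac⟩
  · rwa [Set.mem_preimage, PM.map_reweight]
  · rwa [PM.KL_reweight]
  · calc KL (ν.reweight g μ' hac) ν = KL μ' (ν.map g) := PM.KL_reweight hac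
      _ ≤ KL (ν''.map g) (ν.map g) := hmin _ hν''
      _ ≤ KL ν'' ν := KL_map_le g ν'' ν

end Projection

theorem stmt15_general {X Y : Type} [Fintype X] [Fintype Y] (e : Emb X Y)
    (θ : Set (PM X)) (μ : PM X) (ν : PM Y)
    (hc : Corr e μ ν) :
    SetCorr e (klProj μ θ) (klProj ν (fstar e θ)) := by
  classical
  obtain ⟨g, hg⟩ := e.exists_eq_preimage
  obtain rfl := (corr_iff_map_eq hg).1 hc
  rw [fstar_eq_preimage hg]
  refine ⟨fun ν' hν' => ⟨ν'.map g, map_mem_klProj hν', (corr_iff_map_eq hg).2 rfl⟩,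
    fun μ' hμ' => ?_⟩
  obtain ⟨ν', hν', hmap⟩ := exists_mem_klProj_map_eq hμ'
  exact ⟨ν', hν', (corr_iff_map_eq hg).2 hmap⟩

/-- the relative-entropy projections `μ|θ` and `ν|f*(θ)`
correspond under a faithful embedding whenever `μ` and `ν` do. -/
theorem stmt15 {X Y : Type} [Fintype X] [Fintype Y] (e : Emb X Y)
    (hf : e.Faithful) (θ : Set (PM X)) (μ : PM X) (ν : PM Y)
    (hc : Corr e μ ν) :
    SetCorr e (klProj μ θ) (klProj ν (fstar e θ)) :=
  stmt15_general e θ μ ν hc
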